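/- Let w : ℝ^d → [0,∞) be measurable with ∫ w < ∞, let β > 0, μ ∈ ℝ, and suppose V_min, V_max ∈ L^∞(ℝ^d) both satisfy the fixed point equation V(k) = ∫ w(k−k') /(exp(β(|k'|²/2 − V(k') − μ)) + 1) dk', with 0 ≤ V_min ≤ V_max pointwise. Set g_max(k) = 1/(exp(β(|k|²/2 − V_max(k) − μ)) + 1). Then ‖V_max − V_min‖_{L^∞} ≤ β · ‖w * g_max‖_{L^∞} · ‖V_max − V_min‖_{L^∞}. In particular, if β ‖w * g_max‖_{L^∞} < 1 then V_min = V_max. -/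

import Mathlib

open Real MeasureTheory

/-!
With `f = fermiDirac`, i.e. `f x = 1 / (eˣ + 1)`, for `a ≤ b` we have
`f a - f b = f a · (e^b / (e^b + 1)) · (1 - e^(a-b)) ≤ f a · (b - a)`, so replacing `V_min` by
`V_max` raises the occupation `f(β(|k|²/2 - V - μ))` by at most
`β (V_max - V_min) g_max ≤ β ‖V_max - V_min‖_∞ g_max`. Subtracting the two fixed point equations
and using `w ≥ 0` gives `0 ≤ V_max - V_min ≤ β ‖V_max - V_min‖_∞ (w * g_max)` pointwise, which is
the bound. Under the contraction condition it forces `V_max = V_min` almost everywhere, and then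
everywhere, since the right-hand side of the fixed point equation only sees the a.e. class of `V`.
-/

noncomputable def fermiDirac (x : ℝ) : ℝ := 1 / (exp x + 1)

lemma fermiDirac_nonneg (x : ℝ) : 0 ≤ fermiDirac x := by
  unfold fermiDirac; positivity

lemma fermiDirac_le_one (x : ℝ) : fermiDirac x ≤ 1 :=
  div_le_one_of_le₀ (by linarith [exp_pos x]) (by positivity)

lemma continuous_fermiDirac : Continuous fermiDirac :=
  continuous_const.div (continuous_exp.add continuous_const) fun x => by positivity

lemma fermiDirac_sub_fermiDirac_le {a b : ℝ} (hab : a ≤ b) :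
    fermiDirac a - fermiDirac b ≤ fermiDirac a * (b - a) := by
  have hfactor : fermiDirac a - fermiDirac b =
      fermiDirac a * (exp b / (exp b + 1)) * (1 - exp (a - b)) := by
    unfold fermiDirac
    rw [exp_sub]
    field_simp
    ring
  have hratio : exp b / (exp b + 1) ≤ 1 := div_le_one_of_le₀ (by linarith) (by positivity)
  have hexp : 1 - exp (a - b) ≤ b - a := by linarith [add_one_le_exp (a - b)]
  have hexp_nonneg : 0 ≤ 1 - exp (a - b) := by
    linarith [exp_le_one_iff.2 (sub_nonpos.2 hab)]
  rw [hfactor]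
  exact mul_le_mul (mul_le_of_le_one_right (fermiDirac_nonneg a) hratio) hexp hexp_nonneg
    (fermiDirac_nonneg a)

section

variable {G : Type*} [AddGroup G] [MeasurableSpace G] [MeasurableAdd G] [MeasurableNeg G]
  {ν : Measure G} [ν.IsNegInvariant] [ν.IsAddLeftInvariant] {w : G → ℝ}

lemma norm_integral_comp_sub_mul_le (hw : Integrable w ν) {n : G → ℝ} {C : ℝ}
    (hn : ∀ k, ‖n k‖ ≤ C) (k : G) :
    ‖∫ k', w (k - k') * n k' ∂ν‖ ≤ C * ∫ k', ‖w k'‖ ∂ν := by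
  calc ‖∫ k', w (k - k') * n k' ∂ν‖ ≤ ∫ k', C * ‖w (k - k')‖ ∂ν := by
        refine norm_integral_le_of_norm_le ((hw.comp_sub_left k).norm.const_mul C)
          (ae_of_all _ fun k' => ?_)
        rw [norm_mul, mul_comm C]
        exact mul_le_mul_of_nonneg_left (hn k') (norm_nonneg _)
    _ = C * ∫ k', ‖w k'‖ ∂ν := by
        rw [integral_const_mul, integral_sub_left_eq_self (fun k' => ‖w k'‖) ν k]

lemma eLpNorm_top_integral_comp_sub_mul_lt_top (hw : Integrable w ν) {n : G → ℝ} {C : ℝ}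
    (hn : ∀ k, ‖n k‖ ≤ C) : eLpNorm (fun k => ∫ k', w (k - k') * n k' ∂ν) ⊤ ν < ⊤ := by
  rw [eLpNorm_exponent_top]
  exact eLpNormEssSup_lt_top_of_ae_bound (ae_of_all _ (norm_integral_comp_sub_mul_le hw hn))

lemma integral_mul_fermiDirac_sub_le {β μ M : ℝ} (hβ : 0 ≤ β) {ε V V' : G → ℝ}
    (hw_nonneg : ∀ k, 0 ≤ w k) (hw : Integrable w ν) (hε : AEStronglyMeasurable ε ν)
    (hV : AEStronglyMeasurable V ν) (hV' : AEStronglyMeasurable V' ν)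
    (hVV' : ∀ k, V k ≤ V' k) (hM : ∀ᵐ k ∂ν, V' k - V k ≤ M) (k : G) :
    ∫ k', w (k - k') * fermiDirac (β * (ε k' - V' k' - μ)) ∂ν
        - ∫ k', w (k - k') * fermiDirac (β * (ε k' - V k' - μ)) ∂ν
      ≤ β * M * ∫ k', w (k - k') * fermiDirac (β * (ε k' - V' k' - μ)) ∂ν := by
  have hint : ∀ U : G → ℝ, AEStronglyMeasurable U ν →
      Integrable (fun k' => w (k - k') * fermiDirac (β * (ε k' - U k' - μ))) ν := fun U hU =>
    (hw.comp_sub_left k).mul_bdd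
      (continuous_fermiDirac.comp_aestronglyMeasurable
        (((hε.sub hU).sub aestronglyMeasurable_const).const_mul β))
      (ae_of_all _ fun k' => by
        rw [norm_of_nonneg (fermiDirac_nonneg _)]; exact fermiDirac_le_one _)
  rw [← integral_sub (hint V' hV') (hint V hV), ← integral_const_mul]
  refine integral_mono_ae ((hint V' hV').sub (hint V hV)) ((hint V' hV').const_mul _) ?_
  filter_upwards [hM] with k' hk'
  have hab : β * (ε k' - V' k' - μ) ≤ β * (ε k' - V k' - μ) := by
    gcongr; exact hVV' k'
  have hocc := fermiDirac_sub_fermiDirac_le hab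
  have hw0 := hw_nonneg (k - k')
  have hf0 := fermiDirac_nonneg (β * (ε k' - V' k' - μ))
  calc w (k - k') * fermiDirac (β * (ε k' - V' k' - μ))
        - w (k - k') * fermiDirac (β * (ε k' - V k' - μ))
      ≤ w (k - k') * (fermiDirac (β * (ε k' - V' k' - μ)) * (β * (V' k' - V k'))) := by
        rw [← mul_sub]
        gcongr
        exact hocc.trans_eq (by ring)
    _ ≤ β * M * (w (k - k') * fermiDirac (β * (ε k' - V' k' - μ))) := by
        have : β * (V' k' - V k') ≤ β * M := by gcongr
        nlinarith [mul_nonneg hw0 hf0]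

lemma sub_le_mul_integral_of_fixedPoint {β μ M : ℝ} (hβ : 0 ≤ β) {ε V V' : G → ℝ}
    (hw_nonneg : ∀ k, 0 ≤ w k) (hw : Integrable w ν) (hε : AEStronglyMeasurable ε ν)
    (hV : AEStronglyMeasurable V ν) (hV' : AEStronglyMeasurable V' ν)
    (hVV' : ∀ k, V k ≤ V' k) (hM : ∀ᵐ k ∂ν, V' k - V k ≤ M)
    (hV_fix : ∀ k, V k = ∫ k', w (k - k') / (exp (β * (ε k' - V k' - μ)) + 1) ∂ν)
    (hV'_fix : ∀ k, V' k = ∫ k', w (k - k') / (exp (β * (ε k' - V' k' - μ)) + 1) ∂ν) (k : G) :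
    V' k - V k ≤ β * M * ∫ k', w (k - k') * fermiDirac (β * (ε k' - V' k' - μ)) ∂ν := by
  rw [hV_fix k, hV'_fix k]
  simp only [div_eq_mul_one_div (w _)]
  exact integral_mul_fermiDirac_sub_le hβ hw_nonneg hw hε hV hV' hVV' hM k

end

lemma ENNReal.eq_zero_of_le_mul_of_lt_one {a c : ENNReal} (ha : a ≠ ⊤) (hc : c < 1)
    (h : a ≤ c * a) : a = 0 := by
  by_contra h0
  exact (h.trans_lt (by simpa using ENNReal.mul_lt_mul_left h0 ha hc)).false

theorem Vmin_eq_Vmax_of_contraction_general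
    (d : ℕ) (β μ : ℝ) (hβ : 0 < β)
    (w : EuclideanSpace ℝ (Fin d) → ℝ)
    (hw_nonneg : ∀ k, 0 ≤ w k) (hw_int : Integrable w)
    (Vmin Vmax : EuclideanSpace ℝ (Fin d) → ℝ)
    (hVmin_bdd : MemLp Vmin ⊤ volume) (hVmax_bdd : MemLp Vmax ⊤ volume)
    (hle : ∀ k, 0 ≤ Vmin k ∧ Vmin k ≤ Vmax k)
    (hfixmin : ∀ k, Vmin k =
      ∫ k', w (k - k') / (Real.exp (β * (‖k'‖ ^ 2 / 2 - Vmin k' - μ)) + 1))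
    (hfixmax : ∀ k, Vmax k =
      ∫ k', w (k - k') / (Real.exp (β * (‖k'‖ ^ 2 / 2 - Vmax k' - μ)) + 1))
    (gmax : EuclideanSpace ℝ (Fin d) → ℝ)
    (hgmax : ∀ k, gmax k = 1 / (Real.exp (β * (‖k‖ ^ 2 / 2 - Vmax k - μ)) + 1)) :
    eLpNorm (Vmax - Vmin) ⊤ volume ≤
      ENNReal.ofReal β *
        eLpNorm (fun k => ∫ k', w (k - k') * gmax k') ⊤ volume *
        eLpNorm (Vmax - Vmin) ⊤ volume ∧
    (β * (eLpNorm (fun k => ∫ k', w (k - k') * gmax k') ⊤ volume).toReal < 1 →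
      Vmin = Vmax) := by
  set conv := fun k => ∫ k', w (k - k') * gmax k'
  have hgmax' : ∀ k, gmax k = fermiDirac (β * (‖k‖ ^ 2 / 2 - Vmax k - μ)) := hgmax
  have hD : MemLp (Vmax - Vmin) ⊤ volume := hVmax_bdd.sub hVmin_bdd
  have hconv : eLpNorm conv ⊤ volume ≠ ⊤ :=
    (eLpNorm_top_integral_comp_sub_mul_lt_top hw_int (C := 1) fun k => by
      rw [hgmax', norm_of_nonneg (fermiDirac_nonneg _)]; exact fermiDirac_le_one _).ne
  have hgap : ∀ k, ‖(Vmax - Vmin) k‖ ≤ β * lpNorm (Vmax - Vmin) ⊤ volume * ‖conv k‖ := by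
    intro k
    rw [Pi.sub_apply, norm_of_nonneg (sub_nonneg.2 (hle k).2)]
    have h := sub_le_mul_integral_of_fixedPoint hβ.le hw_nonneg hw_int
      (ε := fun k => ‖k‖ ^ 2 / 2) (by fun_prop) hVmin_bdd.1 hVmax_bdd.1 (fun k => (hle k).2)
      ((ae_le_lpNorm_exponent_top hD).mono fun k hk => (le_norm_self _).trans hk)
      hfixmin hfixmax k
    simp only [← hgmax'] at h
    exact h.trans (mul_le_mul_of_nonneg_left (le_norm_self _) (mul_nonneg hβ.le lpNorm_nonneg))
  have hbound : eLpNorm (Vmax - Vmin) ⊤ volume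
      ≤ ENNReal.ofReal β * eLpNorm conv ⊤ volume * eLpNorm (Vmax - Vmin) ⊤ volume :=
    calc _ ≤ ENNReal.ofReal (β * lpNorm (Vmax - Vmin) ⊤ volume) * eLpNorm conv ⊤ volume :=
          eLpNorm_le_mul_eLpNorm_of_ae_le_mul (ae_of_all _ hgap) ⊤
      _ = _ := by rw [ENNReal.ofReal_mul hβ.le, ofReal_lpNorm hD, mul_right_comm]
  refine ⟨hbound, fun hlt => ?_⟩
  have hzero := ENNReal.eq_zero_of_le_mul_of_lt_one hD.2.ne
    (by rwa [← ENNReal.ofReal_toReal hconv, ← ENNReal.ofReal_mul hβ.le, ENNReal.ofReal_lt_one])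
    hbound
  have hae : Vmax =ᵐ[volume] Vmin :=
    (sub_ae_eq_zero _ _).1 ((eLpNorm_eq_zero_iff hD.1 (by simp)).1 hzero)
  funext k
  rw [hfixmin k, hfixmax k]
  exact integral_congr_ae (hae.mono fun k' hk' => by simp only [hk'])

/-- If `V_min ≤ V_max` are two bounded solutions of the Hartree–Fock fixed point
equation with the same chemical potential `μ`, then
`‖V_max - V_min‖_∞ ≤ β ‖w * g_max‖_∞ ‖V_max - V_min‖_∞`; in particular if
`β ‖w * g_max‖_∞ < 1` then `V_min = V_max`. -/
theorem Vmin_eq_Vmax_of_contraction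
    (d : ℕ) (hd : 1 ≤ d) (β μ : ℝ) (hβ : 0 < β)
    (w : EuclideanSpace ℝ (Fin d) → ℝ)
    (hw_meas : Measurable w) (hw_nonneg : ∀ k, 0 ≤ w k) (hw_int : Integrable w)
    (Vmin Vmax : EuclideanSpace ℝ (Fin d) → ℝ)
    (hVmin_bdd : MemLp Vmin ⊤ volume) (hVmax_bdd : MemLp Vmax ⊤ volume)
    (hle : ∀ k, 0 ≤ Vmin k ∧ Vmin k ≤ Vmax k)
    (hfixmin : ∀ k, Vmin k =
      ∫ k', w (k - k') / (Real.exp (β * (‖k'‖ ^ 2 / 2 - Vmin k' - μ)) + 1))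
    (hfixmax : ∀ k, Vmax k =
      ∫ k', w (k - k') / (Real.exp (β * (‖k'‖ ^ 2 / 2 - Vmax k' - μ)) + 1))
    (gmax : EuclideanSpace ℝ (Fin d) → ℝ)
    (hgmax : ∀ k, gmax k = 1 / (Real.exp (β * (‖k‖ ^ 2 / 2 - Vmax k - μ)) + 1)) :
    eLpNorm (Vmax - Vmin) ⊤ volume ≤
      ENNReal.ofReal β *
        eLpNorm (fun k => ∫ k', w (k - k') * gmax k') ⊤ volume *
        eLpNorm (Vmax - Vmin) ⊤ volume ∧
    (β * (eLpNorm (fun k => ∫ k', w (k - k') * gmax k') ⊤ volume).toReal < 1 →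
      Vmin = Vmax) :=
  Vmin_eq_Vmax_of_contraction_general d β μ hβ w hw_nonneg hw_int Vmin Vmax hVmin_bdd hVmax_bdd hle
    hfixmin hfixmax gmax hgmax
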